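/- Let ε(N) := e^{1/N}·N^{−9/(10(N−3))} and define S(N, j, x) := 2·(−1 + √(1 + ε(N)·x·(ε(N)·x + 2)·(N−j−2))) / ((ε(N)·x + 2)·(N−j−2)). Then: (i) there exists an integer N₀ such that for all N ≥ N₀ and all 1 ≤ j ≤ N−3, every s with 0 < s ≤ S(N, j, s_N^{(j−1)}) is (N,j)-good; and (ii) for every N ≥ 4 and 1 ≤ j ≤ N−3, the function x ↦ S(N, j, x) is strictly increasing on (0, ∞). -/

import Mathlib

open Real Finset

/-- I_s = [(π−s)/2, (π+s)/2]. -/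
noncomputable def Iset (s : ℝ) : Set ℝ := Set.Icc ((Real.pi - s) / 2) ((Real.pi + s) / 2)

/-- F(x₁,…,x_{2r}) = Σ_{m=1}^{r} cos(a_m)cos(b_m)·∏_{ℓ=1}^{m−1} sin(a_ℓ)sin(b_ℓ),
where a_m = x_{2m−1}, b_m = x_{2m}. -/
noncomputable def Fangle (a b : ℕ → ℝ) (r : ℕ) : ℝ :=
  ∑ m ∈ Finset.Icc 1 r, Real.cos (a m) * Real.cos (b m) *
    ∏ l ∈ Finset.Icc 1 (m - 1), (Real.sin (a l) * Real.sin (b l))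

/-- X(x₁,…,x_{2r}) = ∏_{m=1}^{r} sin(a_m)sin(b_m). -/
noncomputable def Xangle (a b : ℕ → ℝ) (r : ℕ) : ℝ :=
  ∏ m ∈ Finset.Icc 1 r, (Real.sin (a m) * Real.sin (b m))

/-- E(m,s) = m·sin²(s/2) − cos(s/2)^{2m} + sin(s/2). -/
noncomputable def Efun (m : ℕ) (s : ℝ) : ℝ :=
  (m : ℝ) * Real.sin (s / 2) ^ 2 - Real.cos (s / 2) ^ (2 * m) + Real.sin (s / 2)

/-- G(N,j,x,s) = (N−j−2)·sin²(s/2) − sin(x/2)·cos(s/2)^{2(N−j−2)} + sin(s/2). -/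
noncomputable def Gfun (N j : ℕ) (x s : ℝ) : ℝ :=
  ((N - j - 2 : ℕ) : ℝ) * Real.sin (s / 2) ^ 2
    - Real.sin (x / 2) * Real.cos (s / 2) ^ (2 * (N - j - 2)) + Real.sin (s / 2)

/-- The sequence s_N^{(j)}: s_N^{(0)} = inf{s > 0 : E(N−2,s) = 0},
s_N^{(j)} = inf{s > 0 : G(N,j,s_N^{(j−1)},s) = 0}. -/
noncomputable def sSeq (N : ℕ) : ℕ → ℝ
  | 0 => sInf {s : ℝ | 0 < s ∧ Efun (N - 2) s = 0}
  | j + 1 => sInf {s : ℝ | 0 < s ∧ Gfun N (j + 1) (sSeq N j) s = 0}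

/-- s is N-good: for all x₁,…,x_{2(N−2)} ∈ I_s,
I_s ⊆ α_{N−1,N}({x₁}×⋯×{x_{2(N−2)}}×(0,π)). -/
def NGood (N : ℕ) (s : ℝ) : Prop :=
  ∀ a b : ℕ → ℝ, (∀ m ∈ Finset.Icc 1 (N - 2), a m ∈ Iset s ∧ b m ∈ Iset s) →
    ∀ y ∈ Iset s, ∃ φ ∈ Set.Ioo (0 : ℝ) Real.pi,
      Real.arccos (Fangle a b (N - 2) + Real.cos φ * Xangle a b (N - 2)) = y

/-- s is (N,j)-good: for all x₁,…,x_{2(N−j−2)} ∈ I_s,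
I_s ⊆ α_{N−j−1,N−j}({x₁}×⋯×{x_{2(N−j−2)}}×I_{s_N^{(j−1)}}). -/
def NjGood (N j : ℕ) (s : ℝ) : Prop :=
  ∀ a b : ℕ → ℝ, (∀ m ∈ Finset.Icc 1 (N - j - 2), a m ∈ Iset s ∧ b m ∈ Iset s) →
    ∀ y ∈ Iset s, ∃ φ ∈ Iset (sSeq N (j - 1)),
      Real.arccos (Fangle a b (N - j - 2) + Real.cos φ * Xangle a b (N - j - 2)) = y

/-- ε(N) = e^{1/N}·N^{−9/(10(N−3))}. -/
noncomputable def epsN (N : ℕ) : ℝ :=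
  Real.exp (1 / (N : ℝ)) * (N : ℝ) ^ (-(9 : ℝ) / (10 * ((N : ℝ) - 3)))

/-- S(N,j,x) = 2(−1 + √(1 + ε(N)x(ε(N)x+2)(N−j−2))) / ((ε(N)x+2)(N−j−2)). -/
noncomputable def Sfun (N j : ℕ) (x : ℝ) : ℝ :=
  2 * (-1 + Real.sqrt (1 + epsN N * x * (epsN N * x + 2) * ((N : ℝ) - j - 2))) /
    ((epsN N * x + 2) * ((N : ℝ) - j - 2))

/-! `S(N, j, x) = quadRoot (N - j - 2) (ε(N) x)`, and the root of the quadratic increases with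
`t = ε(N) x`; this is (ii).

For (i), put `x = s_N^{(j-1)}` and `r = N - j - 2`. The angle `φ = arccos ((cos y - F) / X)`
lies in `I_x` as soon as `|cos y - F| ≤ sin (x/2) X`. On `I_s`, `|cos| ≤ sin (s/2)` and
`sin ≥ cos (s/2)`, so `|F| ≤ r sin² (s/2)` and `X ≥ cos (s/2) ^ 2r`, and it suffices that
`sin (s/2) + r sin² (s/2) ≤ sin (x/2) cos (s/2) ^ 2r`. For `s ≤ S` this follows from `sin u ≤ u`,
`cos u ^ 2r ≥ 1 - r u²` and the quadratic equation of `S`, provided `ε(N) ≤ 1 - x²/16`. That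
holds for `N ≥ 100`: `ε(N) ≤ 1 - 1/(N-2)`, and by the intermediate value theorem every `s_N^{(j)}`
lies in `(0, π/√(N-2)]`, because `E(N-2, ·)` and `G(N, j, s_N^{(j-1)}, ·)` are negative at `0`
and nonnegative at `π/√(N-2)` and at `s_N^{(j-1)}` respectively. -/

/-- The nonnegative root `S` of `(t + 2) ρ S² / 4 + S = t`. -/
noncomputable def quadRoot (ρ t : ℝ) : ℝ :=
  2 * (-1 + Real.sqrt (1 + t * (t + 2) * ρ)) / ((t + 2) * ρ)

section quadRoot

variable {ρ t : ℝ}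

lemma quadRoot_nonneg (hρ : 0 < ρ) (ht : 0 ≤ t) : 0 ≤ quadRoot ρ t := by
  have : 1 ≤ Real.sqrt (1 + t * (t + 2) * ρ) :=
    Real.one_le_sqrt.mpr (le_add_of_nonneg_right (by positivity))
  unfold quadRoot
  apply div_nonneg <;> nlinarith

lemma quadRoot_add_mul_sq (hρ : 0 < ρ) (ht : 0 ≤ t) :
    quadRoot ρ t + ρ * quadRoot ρ t ^ 2 / 2 = t * (1 - ρ * quadRoot ρ t ^ 2 / 4) := by
  have hD : 0 ≤ 1 + t * (t + 2) * ρ := by positivity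
  have hsq := Real.sq_sqrt hD
  unfold quadRoot
  field_simp
  nlinarith [hsq]

lemma quadRoot_le (hρ : 0 < ρ) (ht : 0 ≤ t) : quadRoot ρ t ≤ t := by
  nlinarith [quadRoot_add_mul_sq hρ ht,
    mul_nonneg (mul_nonneg ht hρ.le) (sq_nonneg (quadRoot ρ t))]

lemma one_sub_mul_quadRoot_sq_pos (hρ : 0 < ρ) (ht : 0 ≤ t) :
    0 < 1 - ρ * quadRoot ρ t ^ 2 / 4 := by
  have hS := quadRoot_nonneg hρ ht
  have h := quadRoot_add_mul_sq hρ ht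
  by_contra! hneg
  have : quadRoot ρ t = 0 := by nlinarith [mul_nonneg hρ.le (sq_nonneg (quadRoot ρ t))]
  rw [this] at hneg
  linarith

lemma quadRoot_strictMonoOn (hρ : 0 < ρ) : StrictMonoOn (quadRoot ρ) (Set.Ici 0) := by
  intro t₁ ht₁ t₂ ht₂ hlt
  by_contra! hle
  set S₁ := quadRoot ρ t₁
  set S₂ := quadRoot ρ t₂
  have hS₂ : 0 ≤ S₂ := quadRoot_nonneg hρ ht₂
  have hsq : S₂ ^ 2 ≤ S₁ ^ 2 := pow_le_pow_left₀ hS₂ hle 2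
  have hc : 1 - ρ * S₁ ^ 2 / 4 ≤ 1 - ρ * S₂ ^ 2 / 4 := by gcongr
  have : t₂ * (1 - ρ * S₁ ^ 2 / 4) ≤ t₁ * (1 - ρ * S₁ ^ 2 / 4) :=
    calc t₂ * (1 - ρ * S₁ ^ 2 / 4) ≤ t₂ * (1 - ρ * S₂ ^ 2 / 4) :=
          mul_le_mul_of_nonneg_left hc ht₂
      _ = S₂ + ρ * S₂ ^ 2 / 2 := (quadRoot_add_mul_sq hρ ht₂).symm
      _ ≤ S₁ + ρ * S₁ ^ 2 / 2 := by gcongr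
      _ = t₁ * (1 - ρ * S₁ ^ 2 / 4) := quadRoot_add_mul_sq hρ ht₁
  linarith [mul_lt_mul_of_pos_right hlt (one_sub_mul_quadRoot_sq_pos hρ ht₁)]

end quadRoot

lemma Sfun_eq_quadRoot (N j : ℕ) (x : ℝ) :
    Sfun N j x = quadRoot ((N : ℝ) - j - 2) (epsN N * x) :=
  rfl

lemma epsN_pos {N : ℕ} (hN : 0 < N) : 0 < epsN N := by
  have : (0 : ℝ) < N := by exact_mod_cast hN
  unfold epsN
  positivity

lemma Sfun_strictMonoOn {N j : ℕ} (h : j + 3 ≤ N) : StrictMonoOn (Sfun N j) (Set.Ioi 0) := by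
  have hρ : (0 : ℝ) < (N : ℝ) - j - 2 := by
    have : ((j + 3 : ℕ) : ℝ) ≤ N := by exact_mod_cast h
    push_cast at this
    linarith
  have hε := epsN_pos (N := N) (by omega)
  exact (quadRoot_strictMonoOn hρ).comp ((strictMono_mul_left_of_pos hε).strictMonoOn _)
    fun x hx => Set.mem_Ici.mpr (mul_pos hε hx).le

lemma one_sub_mul_sq_le_cos_pow {u : ℝ} (hu : u ^ 2 ≤ 2) (r : ℕ) :
    1 - r * u ^ 2 ≤ cos u ^ (2 * r) :=
  calc 1 - r * u ^ 2 = 1 + ((2 * r : ℕ) : ℝ) * (-(u ^ 2 / 2)) := by push_cast; ring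
    _ ≤ (1 + -(u ^ 2 / 2)) ^ (2 * r) := one_add_mul_le_pow (by linarith) _
    _ ≤ cos u ^ (2 * r) :=
      pow_le_pow_left₀ (by linarith) (by linarith [one_sub_sq_div_two_le_cos (x := u)]) _

lemma cos_pow_two_mul_le_one (u : ℝ) (m : ℕ) : cos u ^ (2 * m) ≤ 1 := by
  rw [pow_mul]
  exact pow_le_one₀ (sq_nonneg _) (cos_sq_le_one u)

lemma abs_cos_le_sin_half_of_mem_Iset {s θ : ℝ} (hs : s ≤ π) (hθ : θ ∈ Iset s) :
    |cos θ| ≤ sin (s / 2) := by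
  obtain ⟨h₁, h₂⟩ := hθ
  have hlo : cos ((π - s) / 2) = sin (s / 2) := by
    rw [show (π - s) / 2 = π / 2 - s / 2 by ring, cos_pi_div_two_sub]
  have hhi : cos ((π + s) / 2) = -sin (s / 2) := by
    rw [show (π + s) / 2 = π - (π - s) / 2 by ring, cos_pi_sub, hlo]
  rw [abs_le]
  constructor
  · rw [← hhi]; exact cos_le_cos_of_nonneg_of_le_pi (by linarith) (by linarith) h₂
  · rw [← hlo]; exact cos_le_cos_of_nonneg_of_le_pi (by linarith) (by linarith) h₁

lemma cos_half_le_sin_of_mem_Iset {s θ : ℝ} (hs : s ≤ π) (hθ : θ ∈ Iset s) :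
    cos (s / 2) ≤ sin θ := by
  obtain ⟨h₁, h₂⟩ := hθ
  rw [← cos_sub_pi_div_two, ← cos_abs (θ - π / 2)]
  exact cos_le_cos_of_nonneg_of_le_pi (abs_nonneg _) (by linarith)
    (abs_le.mpr ⟨by linarith, by linarith⟩)

lemma arccos_mem_Iset {x c : ℝ} (hx0 : 0 ≤ x) (hxπ : x ≤ π) (hc : |c| ≤ sin (x / 2)) :
    arccos c ∈ Iset x := by
  obtain ⟨hc₁, hc₂⟩ := abs_le.mp hc
  have hc1 : c ∈ Set.Icc (-1) 1 :=
    ⟨by linarith [sin_le_one (x / 2)], by linarith [sin_le_one (x / 2)]⟩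
  have hup : arcsin c ≤ x / 2 :=
    (arcsin_le_iff_le_sin hc1 ⟨by linarith [pi_pos], by linarith⟩).mpr hc₂
  have hlo : -(x / 2) ≤ arcsin c :=
    (le_arcsin_iff_sin_le ⟨by linarith, by linarith [pi_pos]⟩ hc1).mpr (by rw [sin_neg]; linarith)
  rw [arccos_eq_pi_div_two_sub_arcsin]
  exact ⟨by linarith, by linarith⟩

lemma exists_mem_Iset_arccos_eq {F X x y : ℝ} (hX : 0 < X) (hx0 : 0 ≤ x) (hxπ : x ≤ π)
    (hy0 : 0 ≤ y) (hyπ : y ≤ π) (h : |cos y - F| ≤ sin (x / 2) * X) :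
    ∃ φ ∈ Iset x, arccos (F + cos φ * X) = y := by
  set c := (cos y - F) / X
  have hc : |c| ≤ sin (x / 2) := by
    rw [abs_div, abs_of_pos hX, div_le_iff₀ hX]; exact h
  obtain ⟨hc₁, hc₂⟩ := abs_le.mp (hc.trans (sin_le_one _))
  refine ⟨arccos c, arccos_mem_Iset hx0 hxπ hc, ?_⟩
  rw [cos_arccos hc₁ hc₂, div_mul_cancel₀ _ hX.ne', add_sub_cancel, arccos_cos hy0 hyπ]

section angles

variable {a b : ℕ → ℝ} {r : ℕ}

lemma abs_Fangle_le {c : ℝ} (h : ∀ m ∈ Finset.Icc 1 r, |cos (a m)| ≤ c ∧ |cos (b m)| ≤ c) :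
    |Fangle a b r| ≤ r * c ^ 2 := by
  unfold Fangle
  calc _ ≤ ∑ m ∈ Finset.Icc 1 r, |cos (a m) * cos (b m) *
        ∏ l ∈ Finset.Icc 1 (m - 1), (sin (a l) * sin (b l))| := Finset.abs_sum_le_sum_abs _ _
    _ ≤ ∑ _m ∈ Finset.Icc 1 r, c ^ 2 := by
      refine Finset.sum_le_sum fun m hm => ?_
      obtain ⟨ha, hb⟩ := h m hm
      have hprod : |∏ l ∈ Finset.Icc 1 (m - 1), (sin (a l) * sin (b l))| ≤ 1 := by
        rw [Finset.abs_prod]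
        refine Finset.prod_le_one (fun _ _ => abs_nonneg _) fun l _ => ?_
        rw [abs_mul]
        exact mul_le_one₀ (abs_sin_le_one _) (abs_nonneg _) (abs_sin_le_one _)
      rw [abs_mul, abs_mul, sq, ← mul_one (c * c)]
      exact mul_le_mul (mul_le_mul ha hb (abs_nonneg _) ((abs_nonneg _).trans ha)) hprod
        (abs_nonneg _) (mul_self_nonneg c)
    _ = r * c ^ 2 := by simp

lemma pow_le_Xangle {d : ℝ} (hd : 0 ≤ d)
    (h : ∀ m ∈ Finset.Icc 1 r, d ≤ sin (a m) ∧ d ≤ sin (b m)) :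
    d ^ (2 * r) ≤ Xangle a b r := by
  unfold Xangle
  calc d ^ (2 * r) = ∏ _m ∈ Finset.Icc 1 r, d * d := by simp [pow_mul, sq]
    _ ≤ _ := Finset.prod_le_prod (fun _ _ => mul_self_nonneg d)
      fun m hm => mul_le_mul (h m hm).1 (h m hm).2 hd (hd.trans (h m hm).1)

lemma exists_mem_Iset_arccos_Fangle_eq {s x y : ℝ} (hsπ : s < π) (hx0 : 0 ≤ x) (hxπ : x ≤ π)
    (hab : ∀ m ∈ Finset.Icc 1 r, a m ∈ Iset s ∧ b m ∈ Iset s) (hy : y ∈ Iset s)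
    (key : sin (s / 2) + r * sin (s / 2) ^ 2 ≤ sin (x / 2) * cos (s / 2) ^ (2 * r)) :
    ∃ φ ∈ Iset x, arccos (Fangle a b r + cos φ * Xangle a b r) = y := by
  have hs0 : 0 ≤ s := by linarith [hy.1, hy.2]
  have hcos : 0 < cos (s / 2) := cos_pos_of_mem_Ioo ⟨by linarith [pi_pos], by linarith⟩
  have hX : cos (s / 2) ^ (2 * r) ≤ Xangle a b r := pow_le_Xangle hcos.le fun m hm =>
    ⟨cos_half_le_sin_of_mem_Iset hsπ.le (hab m hm).1,
      cos_half_le_sin_of_mem_Iset hsπ.le (hab m hm).2⟩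
  have hF : |Fangle a b r| ≤ r * sin (s / 2) ^ 2 := abs_Fangle_le fun m hm =>
    ⟨abs_cos_le_sin_half_of_mem_Iset hsπ.le (hab m hm).1,
      abs_cos_le_sin_half_of_mem_Iset hsπ.le (hab m hm).2⟩
  have hcy : |cos y| ≤ sin (s / 2) := abs_cos_le_sin_half_of_mem_Iset hsπ.le hy
  refine exists_mem_Iset_arccos_eq ((pow_pos hcos _).trans_le hX) hx0 hxπ
    (by linarith [hy.1]) (by linarith [hy.2]) ?_
  calc |cos y - Fangle a b r| ≤ |cos y| + |Fangle a b r| := abs_sub _ _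
    _ ≤ sin (s / 2) + r * sin (s / 2) ^ 2 := add_le_add hcy hF
    _ ≤ sin (x / 2) * cos (s / 2) ^ (2 * r) := key
    _ ≤ sin (x / 2) * Xangle a b r :=
      mul_le_mul_of_nonneg_left hX (sin_nonneg_of_nonneg_of_le_pi (by linarith) (by linarith))

end angles

lemma sin_add_mul_sin_sq_le {r : ℕ} {ε x s : ℝ} (hr : 0 < r) (hx0 : 0 < x) (hx2 : x ≤ 2)
    (hε0 : 0 < ε) (hε : ε ≤ 1 - x ^ 2 / 16) (hs0 : 0 < s) (hs : s ≤ quadRoot r (ε * x)) :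
    sin (s / 2) + r * sin (s / 2) ^ 2 ≤ sin (x / 2) * cos (s / 2) ^ (2 * r) := by
  set S := quadRoot r (ε * x)
  have hρ : (0 : ℝ) < r := by exact_mod_cast hr
  have ht : 0 ≤ ε * x := by positivity
  have hspec := quadRoot_add_mul_sq hρ ht
  have hcS := one_sub_mul_quadRoot_sq_pos hρ ht
  have hSx : S ≤ x := (quadRoot_le hρ ht).trans (by nlinarith)
  have hsin : 0 ≤ sin (s / 2) :=
    sin_nonneg_of_nonneg_of_le_pi (by linarith) (by linarith [pi_gt_three])
  have hsin_le : sin (s / 2) ≤ s / 2 := sin_le (by linarith)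
  -- `sin y > y - y³/6` at `y = x/2` gives `sin (x/2) ≥ (x/2)(1 - x²/16)`.
  have hεx : ε * x / 2 ≤ sin (x / 2) := by
    nlinarith [sin_gt_sub_cube (x := x / 2) (by linarith)]
  have hcos : 1 - r * (S / 2) ^ 2 ≤ cos (s / 2) ^ (2 * r) :=
    calc 1 - r * (S / 2) ^ 2 ≤ 1 - r * (s / 2) ^ 2 := by gcongr
      _ ≤ cos (s / 2) ^ (2 * r) := one_sub_mul_sq_le_cos_pow (by nlinarith) r
  calc sin (s / 2) + r * sin (s / 2) ^ 2 ≤ S / 2 + r * (S / 2) ^ 2 := by gcongr <;> linarith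
    _ = ε * x / 2 * (1 - r * (S / 2) ^ 2) := by linear_combination hspec / 2
    _ ≤ sin (x / 2) * cos (s / 2) ^ (2 * r) :=
      mul_le_mul hεx hcos (by linarith) (sin_nonneg_of_nonneg_of_le_pi (by linarith)
        (by linarith [pi_gt_three]))

lemma sInf_pos_zeros_mem_Ioc {f : ℝ → ℝ} (hf : Continuous f) (h0 : f 0 < 0) {u : ℝ}
    (hu : 0 < u) (hfu : 0 ≤ f u) : sInf {s | 0 < s ∧ f s = 0} ∈ Set.Ioc 0 u := by
  obtain ⟨z, hz, hfz⟩ := intermediate_value_Icc hu.le hf.continuousOn ⟨h0.le, hfu⟩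
  have hz0 : 0 < z := hz.1.lt_of_ne (by rintro rfl; linarith)
  obtain ⟨δ, hδ, hneg⟩ :=
    exists_Ico_subset_of_mem_nhds (hf.continuousAt.preimage_mem_nhds (Iio_mem_nhds h0))
      ⟨1, one_pos⟩
  constructor
  · refine hδ.trans_le (le_csInf ⟨z, hz0, hfz⟩ fun w hw => ?_)
    by_contra! hwδ
    exact (hneg ⟨hw.1.le, hwδ⟩ : f w < 0).ne hw.2
  · have hbdd : BddBelow {s | 0 < s ∧ f s = 0} := ⟨0, fun w hw => hw.1.le⟩
    exact (csInf_le hbdd ⟨hz0, hfz⟩).trans hz.2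

lemma Efun_nonneg {m : ℕ} {s : ℝ} (h : 1 ≤ m * sin (s / 2) ^ 2) (hs : 0 ≤ sin (s / 2)) :
    0 ≤ Efun m s := by
  unfold Efun
  linarith [cos_pow_two_mul_le_one (s / 2) m]

lemma Gfun_self_nonneg (N j : ℕ) {x : ℝ} (hx : 0 ≤ sin (x / 2)) : 0 ≤ Gfun N j x x := by
  unfold Gfun
  nlinarith [cos_pow_two_mul_le_one (x / 2) (N - j - 2),
    mul_nonneg (Nat.cast_nonneg (α := ℝ) (N - j - 2)) (sq_nonneg (sin (x / 2)))]

lemma sSeq_mem_Ioc {N : ℕ} (hN : 3 ≤ N) (j : ℕ) :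
    sSeq N j ∈ Set.Ioc 0 (π / √((N : ℝ) - 2)) := by
  have hN2 : (1 : ℝ) ≤ (N : ℝ) - 2 := by
    have : ((3 : ℕ) : ℝ) ≤ N := by exact_mod_cast hN
    push_cast at this
    linarith
  have hsqrt : 1 ≤ √((N : ℝ) - 2) := Real.one_le_sqrt.mpr hN2
  set B := π / √((N : ℝ) - 2)
  have hB0 : 0 < B := by positivity
  have hBπ : B ≤ π := div_le_self pi_pos.le hsqrt
  have hsinB : 1 ≤ ((N : ℝ) - 2) * sin (B / 2) ^ 2 := by
    have h := mul_le_sin (x := B / 2) (by positivity) (by linarith)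
    rw [show 2 / π * (B / 2) = 1 / √((N : ℝ) - 2) by simp only [B]; field_simp] at h
    have h2 := pow_le_pow_left₀ (by positivity) h 2
    rw [div_pow, one_pow, Real.sq_sqrt (by linarith), div_le_iff₀ (by linarith)] at h2
    linarith
  induction j with
  | zero =>
    have hcast : (((N - 2 : ℕ) : ℝ)) = (N : ℝ) - 2 := by
      rw [Nat.cast_sub (by omega)]; norm_num
    refine sInf_pos_zeros_mem_Ioc (by unfold Efun; fun_prop) (by simp [Efun]) hB0
      (Efun_nonneg (by rw [hcast]; exact hsinB)
        (sin_nonneg_of_nonneg_of_le_pi (by positivity) (by linarith)))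
  | succ j ih =>
    obtain ⟨hx0, hxB⟩ := ih
    have hsin : 0 < sin (sSeq N j / 2) := sin_pos_of_pos_of_lt_pi (by linarith) (by linarith)
    have h := sInf_pos_zeros_mem_Ioc (f := Gfun N (j + 1) (sSeq N j)) (by unfold Gfun; fun_prop)
      (by simpa [Gfun] using hsin) hx0 (Gfun_self_nonneg N (j + 1) hsin.le)
    exact ⟨h.1, h.2.trans hxB⟩

lemma epsN_le_one_sub {N : ℕ} (hN : 100 ≤ N) : epsN N ≤ 1 - 1 / ((N : ℝ) - 2) := by
  have hNR : (100 : ℝ) ≤ N := by exact_mod_cast hN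
  have hN3 : (0 : ℝ) < N - 3 := by linarith
  have hN2 : (0 : ℝ) < N - 2 := by linarith
  have hlog : 4 ≤ log N := by
    rw [le_log_iff_exp_le (by linarith)]
    calc exp 4 = exp 1 ^ 4 := by rw [← exp_nat_mul]; norm_num
      _ ≤ 2.7182818286 ^ 4 := pow_le_pow_left₀ (exp_pos 1).le exp_one_lt_d9.le 4
      _ ≤ N := by norm_num; linarith
  set a := 9 * log N / (10 * ((N : ℝ) - 3)) - 1 / N
  have hε : epsN N = (exp a)⁻¹ := by
    rw [epsN, rpow_def_of_pos (by linarith), ← exp_add, ← exp_neg]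
    congr 1
    ring
  have ha : 1 / ((N : ℝ) - 3) ≤ a := by
    have h₁ : 1 / (N : ℝ) ≤ 1 / (N - 3) := one_div_le_one_div_of_le hN3 (by linarith)
    have h₂ : 2 / ((N : ℝ) - 3) ≤ 9 * log N / (10 * (N - 3)) := by
      rw [div_le_div_iff₀ hN3 (by positivity)]
      nlinarith
    have h₃ : 2 / ((N : ℝ) - 3) = 1 / (N - 3) + 1 / (N - 3) := by ring
    linarith
  calc epsN N = (exp a)⁻¹ := hε
    _ ≤ (1 + 1 / ((N : ℝ) - 3))⁻¹ :=
      inv_anti₀ (by positivity) (by linarith [add_one_le_exp a])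
    _ = 1 - 1 / ((N : ℝ) - 2) := by field_simp; ring

lemma exists_mem_Iset_arccos_Fangle_eq_of_le_quadRoot {a b : ℕ → ℝ} {r : ℕ} {ε x s y : ℝ}
    (hr : 0 < r) (hx0 : 0 < x) (hx2 : x ≤ 2) (hε0 : 0 < ε) (hε : ε ≤ 1 - x ^ 2 / 16)
    (hs0 : 0 < s) (hs : s ≤ quadRoot r (ε * x))
    (hab : ∀ m ∈ Finset.Icc 1 r, a m ∈ Iset s ∧ b m ∈ Iset s) (hy : y ∈ Iset s) :
    ∃ φ ∈ Iset x, arccos (Fangle a b r + cos φ * Xangle a b r) = y := by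
  have hSx : quadRoot r (ε * x) ≤ ε * x := quadRoot_le (by exact_mod_cast hr) (by positivity)
  have hsπ : s < π := by nlinarith [pi_gt_three]
  exact exists_mem_Iset_arccos_Fangle_eq hsπ hx0.le (by linarith [pi_gt_three]) hab hy
    (sin_add_mul_sin_sq_le hr hx0 hx2 hε0 hε hs0 hs)

/-- (i) for N large, 1 ≤ j ≤ N−3, every 0 < s ≤ S(N,j,s_N^{(j−1)}) is
(N,j)-good; (ii) for every N ≥ 4 and 1 ≤ j ≤ N−3, x ↦ S(N,j,x) is strictly
increasing on (0,∞). -/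
theorem NjGood_of_le_Sfun_and_Sfun_strictMono :
    (∃ N₀ : ℕ, ∀ N : ℕ, N₀ ≤ N → ∀ j : ℕ, 1 ≤ j → j ≤ N - 3 →
      ∀ s : ℝ, 0 < s → s ≤ Sfun N j (sSeq N (j - 1)) → NjGood N j s) ∧
    (∀ N : ℕ, 4 ≤ N → ∀ j : ℕ, 1 ≤ j → j ≤ N - 3 →
      StrictMonoOn (Sfun N j) (Set.Ioi (0 : ℝ))) := by
  refine ⟨⟨100, fun N hN j _ hj s hs0 hsS => ?_⟩,
    fun N _ j hj₁ hj => Sfun_strictMonoOn (by omega)⟩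
  have hNR : (100 : ℝ) ≤ N := by exact_mod_cast hN
  obtain ⟨hx0, hxB⟩ := sSeq_mem_Ioc (N := N) (by omega) (j - 1)
  set x := sSeq N (j - 1)
  have hx : x ^ 2 / 16 ≤ 1 / ((N : ℝ) - 2) :=
    calc x ^ 2 / 16 ≤ (π / √((N : ℝ) - 2)) ^ 2 / 16 := by gcongr
      _ = π ^ 2 / 16 * (1 / ((N : ℝ) - 2)) := by rw [div_pow, sq_sqrt (by linarith)]; ring
      _ ≤ 1 / ((N : ℝ) - 2) :=
        mul_le_of_le_one_left (one_div_pos.mpr (by linarith)).le (by nlinarith [pi_le_four, pi_pos])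
  have hx2 : x ≤ 2 := by
    have : 1 / ((N : ℝ) - 2) ≤ 1 / 4 := one_div_le_one_div_of_le (by norm_num) (by linarith)
    nlinarith
  have hr : ((N - j - 2 : ℕ) : ℝ) = (N : ℝ) - j - 2 := by
    rw [Nat.sub_sub, Nat.cast_sub (by omega)]; push_cast; ring
  rw [Sfun_eq_quadRoot, ← hr] at hsS
  exact fun a b hab y hy => exists_mem_Iset_arccos_Fangle_eq_of_le_quadRoot (by omega) hx0 hx2
    (epsN_pos (by omega)) (by linarith [epsN_le_one_sub hN]) hs0 hsS hab hy
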